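/- arXiv:2312.06935 — 5 statements merged into one kernel-verified Lean document; each statement's English description precedes it below -/
import Mathlib

section
/- For every β ∈ [0,1), every t ≥ 0, and every n ∈ ℕ, the inequality ∑_{m=0}^{n} (β^m − β^{m+1}) · e^{−t} ∑_{k=0}^{m} t^k/k! ≤ e^{−(1−β)t} holds. -/
open Finset

/-- For every `β ∈ [0,1)`, `t ≥ 0` and `n : ℕ`,
`∑_{m=0}^{n} (β^m − β^{m+1}) · e^{−t} ∑_{k=0}^{m} t^k/k! ≤ e^{−(1−β)t}`. -/
theorem poisson_tail_geometric_bound (β : ℝ) (hβ : β ∈ Set.Ico (0 : ℝ) 1)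
    (t : ℝ) (ht : 0 ≤ t) (n : ℕ) :
    ∑ m ∈ Finset.range (n + 1),
      (β ^ m - β ^ (m + 1)) *
        (Real.exp (-t) * ∑ k ∈ Finset.range (m + 1), t ^ k / (Nat.factorial k : ℝ)) ≤
    Real.exp (-(1 - β) * t) := by
  obtain ⟨hβ0, hβ1⟩ := hβ
  have key : ∑ m ∈ Finset.range (n + 1),
      (β ^ m - β ^ (m + 1)) * ∑ k ∈ Finset.range (m + 1), t ^ k / (Nat.factorial k : ℝ)
      ≤ Real.exp (β * t) := by
    have swap : ∑ m ∈ Finset.range (n + 1), ∑ k ∈ Finset.range (m + 1),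
          (β ^ m - β ^ (m + 1)) * (t ^ k / (Nat.factorial k : ℝ))
        = ∑ k ∈ Finset.range (n + 1), ∑ m ∈ Finset.Ico k (n + 1),
          (β ^ m - β ^ (m + 1)) * (t ^ k / (Nat.factorial k : ℝ)) := by
      apply Finset.sum_comm'
      intro m k
      simp only [Finset.mem_range, Finset.mem_Ico]
      omega
    calc ∑ m ∈ Finset.range (n + 1),
        (β ^ m - β ^ (m + 1)) * ∑ k ∈ Finset.range (m + 1), t ^ k / (Nat.factorial k : ℝ)
        = ∑ k ∈ Finset.range (n + 1), ∑ m ∈ Finset.Ico k (n + 1),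
          (β ^ m - β ^ (m + 1)) * (t ^ k / (Nat.factorial k : ℝ)) := by
          rw [← swap]; simp [Finset.mul_sum]
      _ = ∑ k ∈ Finset.range (n + 1),
          (β ^ k - β ^ (n + 1)) * (t ^ k / (Nat.factorial k : ℝ)) := by
          refine Finset.sum_congr rfl fun k hk => ?_
          rw [Finset.mem_range] at hk
          rw [← Finset.sum_mul]
          congr 1
          rw [Finset.sum_Ico_eq_sub _ (by omega : k ≤ n + 1),
            Finset.sum_range_sub' (fun m => β ^ m), Finset.sum_range_sub' (fun m => β ^ m)]
          ring
      _ ≤ ∑ k ∈ Finset.range (n + 1), (β * t) ^ k / (Nat.factorial k : ℝ) := by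
          refine Finset.sum_le_sum fun k _ => ?_
          have h1 : β ^ k - β ^ (n + 1) ≤ β ^ k := by
            have := pow_nonneg hβ0 (n + 1); linarith
          have h2 : (0:ℝ) ≤ t ^ k / (Nat.factorial k : ℝ) :=
            div_nonneg (pow_nonneg ht _) (Nat.cast_nonneg _)
          calc (β ^ k - β ^ (n + 1)) * (t ^ k / (Nat.factorial k : ℝ))
              ≤ β ^ k * (t ^ k / (Nat.factorial k : ℝ)) := mul_le_mul_of_nonneg_right h1 h2
            _ = (β * t) ^ k / (Nat.factorial k : ℝ) := by rw [mul_pow]; ring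
      _ ≤ Real.exp (β * t) := Real.sum_le_exp_of_nonneg (mul_nonneg hβ0 ht) _
  have hE : (0:ℝ) < Real.exp (-t) := Real.exp_pos _
  calc ∑ m ∈ Finset.range (n + 1),
      (β ^ m - β ^ (m + 1)) *
        (Real.exp (-t) * ∑ k ∈ Finset.range (m + 1), t ^ k / (Nat.factorial k : ℝ))
      = Real.exp (-t) * ∑ m ∈ Finset.range (n + 1),
        (β ^ m - β ^ (m + 1)) * ∑ k ∈ Finset.range (m + 1), t ^ k / (Nat.factorial k : ℝ) := by
        rw [Finset.mul_sum]; refine Finset.sum_congr rfl fun m _ => by ring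
    _ ≤ Real.exp (-t) * Real.exp (β * t) := by
        exact mul_le_mul_of_nonneg_left key hE.le
    _ = Real.exp (-(1 - β) * t) := by rw [← Real.exp_add]; ring_nf
end

section
/- Let A be a finite linearly ordered set with at least two elements and minimal element ⊥, let K be a finite set, and let x, y : A → ℝ satisfy x(a) ≠ y(a) for every a ≠ ⊥. Then the family of functions {χ_{L,a_L} : L ⊆ K, a_L : L → A \ {⊥}} is a basis of the real vector space of all functions from A^K (i.e. functions K → A) to ℝ; in particular this family is linearly independent, spans the space, and has cardinality |A|^{|K|}. -/
open Finset

/-- The product-basis function `χ_{L,a_L}` associated to values `x, y : A → ℝ`: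
`χ_{L,a_L}(σ) = ∏_{j∈L} (x (a_L j) if σ j ≥ a_L j, else y (a_L j))`. -/
noncomputable def prodBasisFun {K A : Type*} [LinearOrder A] [OrderBot A] (x y : A → ℝ)
    (p : Σ L : Finset K, ({j // j ∈ L} → {a : A // a ≠ ⊥})) : (K → A) → ℝ :=
  fun σ => ∏ j : {j // j ∈ p.1},
    if ((p.2 j : A) ≤ σ (j : K)) then x (p.2 j) else y (p.2 j)

section Aux

variable {K A : Type*} [Fintype K] [DecidableEq K] [Fintype A] [LinearOrder A] [OrderBot A]

/-- The one-coordinate matrix `N s t = 1` if `t = ⊥`, else `x t` if `t ≤ s`, else `y t`. -/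
noncomputable def pbBaseMat (x y : A → ℝ) : Matrix A A ℝ :=
  Matrix.of fun s t => if t = ⊥ then 1 else if t ≤ s then x t else y t

lemma pbBaseMat_det_ne_zero (x y : A → ℝ) (hxy : ∀ a : A, a ≠ ⊥ → x a ≠ y a) :
    (pbBaseMat x y).det ≠ 0 := by
  classical
  set U : Matrix A A ℝ := Matrix.of fun s t => if t ≤ s then 1 else 0 with hU
  set V : Matrix A A ℝ := Matrix.of fun t' t =>
      if t' = t then (if t = ⊥ then 1 else x t - y t)
      else if t' = ⊥ then (if t = ⊥ then 0 else y t) else 0 with hV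
  have hUV : pbBaseMat x y = U * V := by
    ext s t
    rw [Matrix.mul_apply]
    by_cases ht : t = ⊥
    · subst ht
      have : ∀ t' : A, U s t' * V t' ⊥ = if t' = ⊥ then 1 else 0 := by
        intro t'
        by_cases h : t' = (⊥ : A) <;> simp [hU, hV, h, bot_le]
      rw [Finset.sum_congr rfl fun t' _ => this t']
      simp [pbBaseMat]
    · have : ∀ t' : A, U s t' * V t' t =
          (if t' = t then (if t ≤ s then x t - y t else 0) else 0) +
          (if t' = ⊥ then y t else 0) := by
        intro t'
        by_cases h1 : t' = t
        · subst h1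
          by_cases h2 : t' ≤ s <;> simp [hU, hV, ht, h2]
        · by_cases h2 : t' = ⊥
          · subst h2
            simp [hU, hV, Matrix.of_apply, if_neg h1, ht, bot_le, Ne.symm]
          · simp [hU, hV, h1, h2]
      rw [Finset.sum_congr rfl fun t' _ => this t', Finset.sum_add_distrib,
        Finset.sum_ite_eq' univ t, Finset.sum_ite_eq' univ (⊥ : A)]
      simp only [Finset.mem_univ, if_pos]
      by_cases h2 : t ≤ s <;> simp [pbBaseMat, ht, h2]
  have hdetU : U.det = 1 := by
    have htri : U.BlockTriangular OrderDual.toDual := by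
      intro s t h
      have : ¬ t ≤ s := not_le.mpr h
      simp [hU, this]
    rw [Matrix.det_of_lowerTriangular U htri]
    simp [hU]
  have hdetV : V.det = ∏ t : A, (if t = ⊥ then 1 else x t - y t) := by
    have htri : V.BlockTriangular id := by
      intro t' t h
      have h1 : t' ≠ t := by intro he; exact absurd he.symm (ne_of_lt h)
      have h2 : t' ≠ ⊥ := by
        intro he; subst he; exact absurd h (not_lt.mpr bot_le)
      simp [hV, h1, h2]
    rw [Matrix.det_of_upperTriangular htri]
    simp [hV]
  rw [hUV, Matrix.det_mul, hdetU, hdetV, one_mul]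
  rw [Finset.prod_ne_zero_iff]
  intro t _
  by_cases ht : t = ⊥
  · simp [ht]
  · simpa [ht] using sub_ne_zero_of_ne (hxy t ht)

/-- Map from the sigma index type to configurations. -/
def pbToFun (p : Σ L : Finset K, ({j // j ∈ L} → {a : A // a ≠ ⊥})) : K → A :=
  fun j => if h : j ∈ p.1 then (p.2 ⟨j, h⟩ : A) else ⊥

lemma pbToFun_mem_iff (p : Σ L : Finset K, ({j // j ∈ L} → {a : A // a ≠ ⊥})) (j : K) :
    j ∈ p.1 ↔ pbToFun p j ≠ ⊥ := by
  constructor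
  · intro h
    simp only [pbToFun, dif_pos h]
    exact (p.2 ⟨j, h⟩).2
  · intro h
    by_contra hj
    simp [pbToFun, dif_neg hj] at h

lemma pbToFun_bijective :
    Function.Bijective (pbToFun (K := K) (A := A)) := by
  classical
  constructor
  · rintro ⟨L, a⟩ ⟨L', a'⟩ h
    have hL : L = L' := by
      ext j
      rw [pbToFun_mem_iff ⟨L, a⟩ j, pbToFun_mem_iff ⟨L', a'⟩ j, h]
    subst hL
    have ha : a = a' := by
      funext j
      apply Subtype.ext
      have := congrFun h j.1
      simpa [pbToFun, j.2] using this
    rw [ha]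
  · intro τ
    refine ⟨⟨Finset.univ.filter (fun j => τ j ≠ ⊥),
      fun j => ⟨τ j.1, (Finset.mem_filter.mp j.2).2⟩⟩, ?_⟩
    funext j
    by_cases h : τ j = ⊥ <;> simp [pbToFun, h]

lemma pbChi_eq (x y : A → ℝ) (p : Σ L : Finset K, ({j // j ∈ L} → {a : A // a ≠ ⊥}))
    (σ : K → A) :
    prodBasisFun x y p σ = ∏ j : K, pbBaseMat x y (σ j) (pbToFun p j) := by
  classical
  have h1 : ∏ j : K, pbBaseMat x y (σ j) (pbToFun p j)
      = ∏ j ∈ p.1, pbBaseMat x y (σ j) (pbToFun p j) := by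
    refine (Finset.prod_subset (Finset.subset_univ p.1) ?_).symm
    intro j _ hj
    have : pbToFun p j = ⊥ := by
      by_contra h
      exact hj ((pbToFun_mem_iff p j).mpr h)
    simp [pbBaseMat, this]
  rw [h1, ← Finset.prod_attach p.1 (fun j => pbBaseMat x y (σ j) (pbToFun p j))]
  unfold prodBasisFun
  rw [Finset.univ_eq_attach]
  refine Finset.prod_congr rfl ?_
  intro j _
  have hmem : (j : K) ∈ p.1 := j.2
  have hval : pbToFun p (j : K) = (p.2 j : A) := by
    simp [pbToFun, dif_pos hmem]
  rw [hval]
  have hne : (p.2 j : A) ≠ ⊥ := (p.2 j).2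
  simp [pbBaseMat, hne]

lemma pbProd_mat_mul (P Q : Matrix A A ℝ) :
    (Matrix.of fun σ τ : K → A => ∏ j, P (σ j) (τ j)) *
      (Matrix.of fun σ τ : K → A => ∏ j, Q (σ j) (τ j)) =
      Matrix.of fun σ τ : K → A => ∏ j, (P * Q) (σ j) (τ j) := by
  classical
  ext σ ρ
  rw [Matrix.mul_apply]
  simp only [Matrix.of_apply, Matrix.mul_apply]
  have : ∀ τ : K → A, (∏ j, P (σ j) (τ j)) * ∏ j, Q (τ j) (ρ j)
      = ∏ j, P (σ j) (τ j) * Q (τ j) (ρ j) := fun τ => (Finset.prod_mul_distrib).symm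
  rw [Finset.sum_congr rfl fun τ _ => this τ]
  rw [show (∏ j, ∑ t : A, P (σ j) t * Q t (ρ j))
      = ∑ τ ∈ Fintype.piFinset (fun _ : K => (Finset.univ : Finset A)),
        ∏ j, P (σ j) (τ j) * Q (τ j) (ρ j) from
    Finset.prod_univ_sum (fun _ => Finset.univ) (fun j t => P (σ j) t * Q t (ρ j))]
  rw [Fintype.piFinset_univ]

lemma pbProd_one :
    (Matrix.of fun σ τ : K → A => ∏ j, (1 : Matrix A A ℝ) (σ j) (τ j)) = 1 := by
  classical
  ext σ τ
  by_cases h : σ = τ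
  · subst h
    simp [Matrix.one_apply]
  · rw [Matrix.of_apply, Matrix.one_apply_ne h]
    obtain ⟨j, hj⟩ := Function.ne_iff.mp h
    exact Finset.prod_eq_zero (Finset.mem_univ j) (by simp [Matrix.one_apply, hj])

end Aux

/-- For a finite linearly ordered alphabet `A` with at least two elements
and minimal element `⊥`, a finite index set `K`, and values `x, y : A → ℝ` with
`x a ≠ y a` for all `a ≠ ⊥`, the family `{χ_{L,a_L} : L ⊆ K, a_L : L → A∖{⊥}}` is a basis
of the space of functions `(K → A) → ℝ`: it is linearly independent, spans the space, and
has cardinality `|A|^|K|`. -/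
theorem product_basis_is_basis {K A : Type*} [Fintype K] [DecidableEq K]
    [Fintype A] [LinearOrder A] [OrderBot A] (hA : 2 ≤ Fintype.card A)
    (x y : A → ℝ) (hxy : ∀ a : A, a ≠ ⊥ → x a ≠ y a) :
    LinearIndependent ℝ (prodBasisFun (K := K) (A := A) x y) ∧
    Submodule.span ℝ (Set.range (prodBasisFun (K := K) (A := A) x y)) = ⊤ ∧
    Fintype.card (Σ L : Finset K, ({j // j ∈ L} → {a : A // a ≠ ⊥})) =
      Fintype.card A ^ Fintype.card K := by
  classical
  set N := pbBaseMat x y with hNdef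
  have hNunit : IsUnit N.det := isUnit_iff_ne_zero.mpr (pbBaseMat_det_ne_zero x y hxy)
  set M : Matrix (K → A) (K → A) ℝ := Matrix.of fun σ τ => ∏ j, N (σ j) (τ j) with hMdef
  set M' : Matrix (K → A) (K → A) ℝ := Matrix.of fun σ τ => ∏ j, N⁻¹ (σ j) (τ j) with hM'def
  have hMM' : M * M' = 1 := by
    rw [hMdef, hM'def, pbProd_mat_mul, Matrix.mul_nonsing_inv N hNunit, pbProd_one]
  have hM'M : M' * M = 1 := by
    rw [hMdef, hM'def, pbProd_mat_mul, Matrix.nonsing_inv_mul N hNunit, pbProd_one]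
  set e : (Σ L : Finset K, ({j // j ∈ L} → {a : A // a ≠ ⊥})) ≃ (K → A) :=
    Equiv.ofBijective _ pbToFun_bijective with hedef
  have hchi : ∀ p σ, prodBasisFun x y p σ = M σ (e p) := by
    intro p σ
    rw [pbChi_eq x y p σ]
    rfl
  refine ⟨?_, ?_, ?_⟩
  · rw [Fintype.linearIndependent_iff]
    intro g hg
    set w : (K → A) → ℝ := fun τ => g (e.symm τ) with hwdef
    have hw : M.mulVec w = 0 := by
      funext σ
      have h1 := congrFun hg σ
      simp only [Finset.sum_apply, Pi.smul_apply, smul_eq_mul, Pi.zero_apply] at h1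
      have h2 : M.mulVec w σ = ∑ τ, M σ τ * w τ := by
        simp [Matrix.mulVec, dotProduct]
      rw [h2, Pi.zero_apply]
      rw [← Equiv.sum_comp e (fun τ => M σ τ * w τ)]
      calc ∑ p, M σ (e p) * w (e p)
          = ∑ p, g p • prodBasisFun x y p σ := by
            refine Finset.sum_congr rfl fun p _ => ?_
            rw [hwdef]
            simp only [Equiv.symm_apply_apply, smul_eq_mul]
            rw [hchi p σ, mul_comm]
        _ = 0 := h1
    have hw0 : w = 0 := by
      calc w = (1 : Matrix (K → A) (K → A) ℝ).mulVec w := (Matrix.one_mulVec w).symm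
        _ = (M' * M).mulVec w := by rw [hM'M]
        _ = M'.mulVec (M.mulVec w) := (Matrix.mulVec_mulVec w M' M).symm
        _ = M'.mulVec 0 := by rw [hw]
        _ = 0 := Matrix.mulVec_zero M'
    intro p
    have h3 : w (e p) = 0 := by rw [hw0]; rfl
    rw [hwdef] at h3
    simpa using h3
  · rw [eq_top_iff]
    intro f _
    have hf : f = ∑ p, (M'.mulVec f (e p)) • prodBasisFun x y p := by
      funext σ
      rw [Finset.sum_apply]
      simp only [Pi.smul_apply, smul_eq_mul]
      calc f σ = (M * M').mulVec f σ := by rw [hMM', Matrix.one_mulVec]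
        _ = M.mulVec (M'.mulVec f) σ := by rw [Matrix.mulVec_mulVec]
        _ = ∑ τ, M σ τ * M'.mulVec f τ := by simp [Matrix.mulVec, dotProduct]
        _ = ∑ p, M σ (e p) * M'.mulVec f (e p) :=
            (Equiv.sum_comp e (fun τ => M σ τ * M'.mulVec f τ)).symm
        _ = ∑ p, M'.mulVec f (e p) * prodBasisFun x y p σ := by
            refine Finset.sum_congr rfl fun p _ => ?_
            rw [hchi p σ, mul_comm]
    rw [hf]
    exact Submodule.sum_mem _ fun p _ =>
      Submodule.smul_mem _ _ (Submodule.subset_span ⟨p, rfl⟩)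
  · rw [Fintype.card_congr e, Fintype.card_fun]
end

section
/- Let (S, 𝒮) be a measurable space and κ a Markov kernel from S to S; for a bounded measurable f : S → ℝ let κ^n f denote the function x ↦ ∫ f d(κ^n(x,·)), where κ^n is the n-fold composition of κ. Suppose that for every probability measure μ on S and all bounded measurable f, g : S → ℝ the covariance ∫ g·(κ^n f) dμ − (∫ g dμ)(∫ κ^n f dμ) tends to 0 as n → ∞. Then for all probability measures μ, ν on S and every bounded measurable f : S → ℝ, ∫ (κ^n f) dμ − ∫ (κ^n f) dν tends to 0 as n → ∞. -/
open MeasureTheory ProbabilityTheory Filter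
open scoped ENNReal NNReal

/-- `n`-fold composition of a Markov kernel with itself. -/
noncomputable def kernelPow {S : Type*} [MeasurableSpace S] (κ : Kernel S S) : ℕ → Kernel S S
  | 0 => Kernel.id
  | n + 1 => κ.comp (kernelPow κ n)

instance kernelPow_isMarkov {S : Type*} [MeasurableSpace S] (κ : Kernel S S) [IsMarkovKernel κ] :
    ∀ n, IsMarkovKernel (kernelPow κ n)
  | 0 => by rw [kernelPow]; infer_instance
  | n + 1 => by
      have := kernelPow_isMarkov κ n
      rw [kernelPow]; infer_instance

/-- If for every initial probability measure `μ` and all bounded measurable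
`f, g` the covariance `∫ g·(κ^n f) dμ − (∫ g dμ)(∫ κ^n f dμ)` tends to `0`, then for all
probability measures `μ, ν` and every bounded measurable `f`, the difference
`∫ κ^n f dμ − ∫ κ^n f dν` tends to `0` as `n → ∞`. -/
theorem covariance_decay_implies_merging {S : Type*} [MeasurableSpace S]
    (κ : Kernel S S) [IsMarkovKernel κ]
    (hcov : ∀ (μ : Measure S), IsProbabilityMeasure μ →
      ∀ f g : S → ℝ, Measurable f → Measurable g →
        (∃ C, ∀ x, |f x| ≤ C) → (∃ C, ∀ x, |g x| ≤ C) →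
        Tendsto (fun n : ℕ =>
            (∫ x, g x * ∫ y, f y ∂(kernelPow κ n x) ∂μ)
              - (∫ x, g x ∂μ) * (∫ x, ∫ y, f y ∂(kernelPow κ n x) ∂μ))
          atTop (nhds 0)) :
    ∀ (μ ν : Measure S), IsProbabilityMeasure μ → IsProbabilityMeasure ν →
      ∀ f : S → ℝ, Measurable f → (∃ C, ∀ x, |f x| ≤ C) →
      Tendsto (fun n : ℕ =>
          (∫ x, ∫ y, f y ∂(kernelPow κ n x) ∂μ) - (∫ x, ∫ y, f y ∂(kernelPow κ n x) ∂ν))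
        atTop (nhds 0) := by
  intro μ ν hμ hν f hf hC
  obtain ⟨C, hCf⟩ := hC
  set ρ : Measure S := (2⁻¹ : ℝ≥0∞) • μ + (2⁻¹ : ℝ≥0∞) • ν with hρ
  have hρprob : IsProbabilityMeasure ρ := by
    constructor
    simp [hρ, Measure.add_apply, hμ.measure_univ, hν.measure_univ]
    rw [← two_mul, ENNReal.mul_inv_cancel] <;> norm_num
  have hμρ : μ ≪ ρ := by
    refine Measure.AbsolutelyContinuous.mk fun s hs h0 => ?_
    simp only [hρ, Measure.add_apply, Measure.smul_apply, smul_eq_mul, add_eq_zero,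
      mul_eq_zero] at h0
    rcases h0.1 with h | h
    · norm_num at h
    · exact h
  have hνρ : ν ≪ ρ := by
    refine Measure.AbsolutelyContinuous.mk fun s hs h0 => ?_
    simp only [hρ, Measure.add_apply, Measure.smul_apply, smul_eq_mul, add_eq_zero,
      mul_eq_zero] at h0
    rcases h0.2 with h | h
    · norm_num at h
    · exact h
  set g : S → ℝ := fun x => min ((μ.rnDeriv ρ x).toReal) 2 with hg
  have hgm : Measurable g := (Measure.measurable_rnDeriv μ ρ).ennreal_toReal.min measurable_const
  have hgbd : ∀ x, |g x| ≤ 2 := by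
    intro x
    rw [abs_le]
    constructor
    · refine le_trans (by norm_num) (le_min ENNReal.toReal_nonneg (by norm_num))
    · exact min_le_right _ _
  -- rnDeriv μ ρ ≤ 2 a.e.
  have hcoe : ((2⁻¹ : ℝ≥0) : ℝ≥0∞) = 2⁻¹ := by
    rw [ENNReal.coe_inv (by norm_num)]; norm_num
  have hle : (2⁻¹ : ℝ≥0) • μ ≤ ρ := by
    have hsm : (2⁻¹ : ℝ≥0) • μ = (2⁻¹ : ℝ≥0∞) • μ := by
      ext s hs
      simp [ENNReal.smul_def, hcoe]
    rw [hsm, hρ]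
    exact Measure.le_add_right le_rfl
  have hrn2 : μ.rnDeriv ρ ≤ᵐ[ρ] fun _ => (2 : ℝ≥0∞) := by
    have h1 : ((2⁻¹ : ℝ≥0) • μ).rnDeriv ρ ≤ᵐ[ρ] 1 := Measure.rnDeriv_le_one_of_le hle
    have h2 : ((2⁻¹ : ℝ≥0) • μ).rnDeriv ρ =ᵐ[ρ] (2⁻¹ : ℝ≥0) • μ.rnDeriv ρ :=
      Measure.rnDeriv_smul_left μ ρ 2⁻¹
    filter_upwards [h1, h2] with x h1 h2
    rw [h2] at h1
    simp only [Pi.smul_apply, ENNReal.smul_def, smul_eq_mul, Pi.one_apply] at h1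
    rw [hcoe] at h1
    calc μ.rnDeriv ρ x = 2 * (2⁻¹ * μ.rnDeriv ρ x) := by
          rw [← mul_assoc, ENNReal.mul_inv_cancel (by norm_num) (by norm_num), one_mul]
      _ ≤ 2 * 1 := mul_le_mul_right h1 2
      _ = 2 := mul_one _
  have hgae : g =ᵐ[ρ] fun x => (μ.rnDeriv ρ x).toReal := by
    filter_upwards [hrn2] with x hx
    have : (μ.rnDeriv ρ x).toReal ≤ 2 := by
      calc (μ.rnDeriv ρ x).toReal ≤ ((2 : ℝ≥0∞)).toReal :=
            ENNReal.toReal_mono (by norm_num) hx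
        _ = 2 := by norm_num
    simp [hg, min_eq_left this]
  -- F n measurable and bounded
  set F : ℕ → S → ℝ := fun n x => ∫ y, f y ∂(kernelPow κ n x) with hF
  have hFm : ∀ n, Measurable (F n) := by
    intro n
    have : StronglyMeasurable (Function.uncurry fun (_ : S) y => f y) :=
      (hf.comp measurable_snd).stronglyMeasurable
    exact (this.integral_kernel_prod_right (κ := kernelPow κ n)).measurable
  have hFbd : ∀ n x, |F n x| ≤ |C| := by
    intro n x
    rw [← Real.norm_eq_abs]
    calc ‖F n x‖ ≤ |C| * ((kernelPow κ n x) Set.univ).toReal :=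
          norm_integral_le_of_norm_le_const
            (Filter.Eventually.of_forall fun y => (hCf y).trans (le_abs_self C))
      _ = |C| := by simp
  have hFint : ∀ n (m : Measure S), IsProbabilityMeasure m → Integrable (F n) m := by
    intro n m hm
    refine Integrable.mono' (integrable_const |C|) (hFm n).aestronglyMeasurable ?_
    exact Filter.Eventually.of_forall fun x => hFbd n x
  -- key integral identities
  have key1 : ∀ n, ∫ x, g x * F n x ∂ρ = ∫ x, F n x ∂μ := by
    intro n
    have h1 : ∫ x, g x * F n x ∂ρ = ∫ x, (μ.rnDeriv ρ x).toReal • F n x ∂ρ := by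
      refine integral_congr_ae ?_
      filter_upwards [hgae] with x hx
      rw [hx, smul_eq_mul]
    rw [h1, MeasureTheory.integral_rnDeriv_smul hμρ]
  have key2 : ∫ x, g x ∂ρ = 1 := by
    have h1 : ∫ x, g x ∂ρ = ∫ x, (μ.rnDeriv ρ x).toReal ∂ρ := integral_congr_ae hgae
    rw [h1, Measure.integral_toReal_rnDeriv hμρ]
    norm_num
  have key3 : ∀ n, ∫ x, F n x ∂ρ = 2⁻¹ * (∫ x, F n x ∂μ) + 2⁻¹ * (∫ x, F n x ∂ν) := by
    intro n
    rw [hρ, integral_add_measure ((hFint n μ hμ).smul_measure (by norm_num))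
      ((hFint n ν hν).smul_measure (by norm_num)), integral_smul_measure, integral_smul_measure]
    norm_num
  have hA := hcov ρ hρprob f g hf hgm ⟨|C|, fun x => (hCf x).trans (le_abs_self C)⟩ ⟨2, hgbd⟩
  have heq : (fun n : ℕ =>
      (∫ x, ∫ y, f y ∂(kernelPow κ n x) ∂μ) - (∫ x, ∫ y, f y ∂(kernelPow κ n x) ∂ν))
      = fun n : ℕ => 2 * ((∫ x, g x * ∫ y, f y ∂(kernelPow κ n x) ∂ρ)
          - (∫ x, g x ∂ρ) * (∫ x, ∫ y, f y ∂(kernelPow κ n x) ∂ρ)) := by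
    funext n
    have k1 := key1 n
    have k3 := key3 n
    simp only [hF] at k1 k3
    rw [k1, key2, k3]
    ring
  rw [heq]
  have := hA.const_mul (2 : ℝ)
  simpa using this
end

section
/- Let Λ be a set, A a finite linearly ordered set, and order configurations ζ, ξ : Λ → A pointwise. Fix j ∈ Λ and let G : A → (Λ → A) → ℝ satisfy 0 ≤ G(a)(ζ) ≤ 1 for all a and ζ, together with the weak-monotonicity hypothesis: for all a ∈ A and all ζ ≥ ξ such that either (ζ(j) ≥ a and ξ(j) ≥ a) or (ζ(j) < a and ξ(j) < a), one has G(a)(ζ) ≥ G(a)(ξ). Then for every λ with 0 < λ ≤ 1/2, every a ∈ A, and all ζ ≥ ξ: λ·G(a)(ζ) + (1−λ)·𝟙[ζ(j) ≥ a] ≥ λ·G(a)(ξ) + (1−λ)·𝟙[ξ(j) ≥ a]. -/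
/-- Pointwise content of the lemma that a weakly monotone transition rule
becomes monotone after convex combination with the identity, for `0 < λ ≤ 1/2`.
Here `G a ζ` plays the role of the tail probability `P_j(a_+ | ζ)` and
`λ·G a ζ + (1−λ)·𝟙[ζ j ≥ a]` is the tail probability of `λP + (1−λ)I`. -/
theorem weakly_monotone_convex_combination_monotone
    {Λ A : Type*} [Fintype A] [LinearOrder A] (j : Λ)
    (G : A → (Λ → A) → ℝ)
    (hG01 : ∀ (a : A) (ζ : Λ → A), 0 ≤ G a ζ ∧ G a ζ ≤ 1)
    (hweak : ∀ (a : A) (ζ ξ : Λ → A), (∀ i, ξ i ≤ ζ i) →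
      ((a ≤ ζ j ∧ a ≤ ξ j) ∨ (ζ j < a ∧ ξ j < a)) → G a ξ ≤ G a ζ)
    (lam : ℝ) (hlam0 : 0 < lam) (hlam2 : lam ≤ 1 / 2)
    (a : A) (ζ ξ : Λ → A) (hle : ∀ i, ξ i ≤ ζ i) :
    lam * G a ξ + (1 - lam) * (if a ≤ ξ j then (1 : ℝ) else 0) ≤
      lam * G a ζ + (1 - lam) * (if a ≤ ζ j then (1 : ℝ) else 0) := by
  by_cases hξ : a ≤ ξ j
  · have hζ : a ≤ ζ j := hξ.trans (hle j)
    simp only [hξ, hζ, if_true]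
    have := hweak a ζ ξ hle (Or.inl ⟨hζ, hξ⟩)
    nlinarith
  · by_cases hζ : a ≤ ζ j
    · simp only [hξ, hζ, if_true, if_false]
      have h1 := (hG01 a ξ).2
      have h2 := (hG01 a ζ).1
      nlinarith
    · simp only [hξ, hζ, if_false]
      have := hweak a ζ ξ hle (Or.inr ⟨lt_of_not_ge hζ, lt_of_not_ge hξ⟩)
      nlinarith
end

section
/- Let λ, γ, δ > 0 be reals and n ≥ 2 a natural number, and set β := 1 + δ + γ + λ·n. If max(γ/(1+γ), λ/(λ+δ)) < (1 + 2λ + δ − λ·n)/(δ + λ·n), then there exist reals A, B ∈ (0,1] such that both 1 − (1+δ)/β + |A·λ − λ + A·δ|/(B·β) + (n−1)·(1+A)·λ/(B·β) < 1 and (B·γ)/(A·β) + 1 − 1/β − γ/β < 1 hold. -/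
/-- Sufficiency criterion for the two-stage contact process to die out:
if `max(γ/(1+γ), λ/(λ+δ)) < (1 + 2λ + δ − λn)/(δ + λn)` with `β = 1 + δ + γ + λn`, then
there exist basis values `A, B ∈ (0,1]` satisfying the two contractivity inequalities of the
covariance-decay criterion. -/
theorem two_stage_contact_contractivity_exists
    (lam gam del : ℝ) (hlam : 0 < lam) (hgam : 0 < gam) (hdel : 0 < del)
    (n : ℕ) (hn : 2 ≤ n)
    (beta : ℝ) (hbeta : beta = 1 + del + gam + lam * n)
    (h : max (gam / (1 + gam)) (lam / (lam + del))
        < (1 + 2 * lam + del - lam * n) / (del + lam * n)) :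
    ∃ A B : ℝ, A ∈ Set.Ioc (0 : ℝ) 1 ∧ B ∈ Set.Ioc (0 : ℝ) 1 ∧
      1 - (1 + del) / beta + |A * lam - lam + A * del| / (B * beta)
          + ((n : ℝ) - 1) * (1 + A) * lam / (B * beta) < 1 ∧
      (B * gam) / (A * beta) + 1 - 1 / beta - gam / beta < 1 := by
  have hn' : (2 : ℝ) ≤ (n : ℝ) := by exact_mod_cast hn
  have hβ : 0 < beta := by rw [hbeta]; nlinarith
  set R := (1 + 2 * lam + del - lam * n) / (del + lam * n) with hR
  set m := max (gam / (1 + gam)) (lam / (lam + del)) with hm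
  have hden : 0 < del + lam * n := by nlinarith
  have hm1 : m < 1 := by
    apply max_lt
    · rw [div_lt_one (by linarith)]; linarith
    · rw [div_lt_one (by linarith)]; linarith
  have hm0 : 0 < m := lt_max_of_lt_left (by positivity)
  set A := min 1 ((m + R) / 2) with hA
  have hA1 : m < A := lt_min hm1 (by linarith)
  have hAR : A < R := min_lt_iff.mpr (Or.inr (by linarith))
  have hA0 : 0 < A := hm0.trans hA1
  have hAle : A ≤ 1 := min_le_left _ _
  have hAl : lam / (lam + del) < A := lt_of_le_of_lt (le_max_right _ _) hA1
  have hAg : gam / (1 + gam) < A := lt_of_le_of_lt (le_max_left _ _) hA1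
  have hAl' : lam < A * (lam + del) := (div_lt_iff₀ (by linarith)).mp hAl
  have hAg' : gam < A * (1 + gam) := (div_lt_iff₀ (by linarith)).mp hAg
  have hAR' : A * (del + lam * n) < 1 + 2 * lam + del - lam * n :=
    (lt_div_iff₀ hden).mp hAR
  refine ⟨A, 1, ⟨hA0, hAle⟩, ⟨one_pos, le_refl 1⟩, ?_, ?_⟩
  · rw [abs_of_nonneg (by nlinarith), one_mul]
    have key : (A * lam - lam + A * del) + ((n : ℝ) - 1) * (1 + A) * lam < 1 + del := by
      nlinarith
    have e : 1 - (1 + del) / beta + (A * lam - lam + A * del) / beta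
          + ((n : ℝ) - 1) * (1 + A) * lam / beta
        = 1 + ((A * lam - lam + A * del + ((n : ℝ) - 1) * (1 + A) * lam) - (1 + del)) / beta := by
      field_simp; ring
    rw [e]
    linarith [div_neg_of_neg_of_pos
      (show (A * lam - lam + A * del + ((n : ℝ) - 1) * (1 + A) * lam) - (1 + del) < 0 by linarith) hβ]
  · rw [one_mul]
    have h3 : gam / (A * beta) < (A * (1 + gam)) / (A * beta) :=
      (div_lt_div_iff_of_pos_right (by positivity)).mpr hAg'
    rw [mul_div_mul_left _ _ (ne_of_gt hA0)] at h3
    have h4 : (1 + gam) / beta = 1 / beta + gam / beta := add_div _ _ _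
    linarith
end
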